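/- Suppose the potential condition U_i(a) − U_i(a_i', a_{-i}) = φ(a) − φ(a_i', a_{-i}) holds for all i. Then under best-response dynamics (one player at a time switches to an action strictly increasing its utility), the potential φ strictly increases at every improving step; consequently if the joint action space is finite, best-response dynamics terminates at a Nash equilibrium in finitely many steps. -/
import Mathlib


/-- In a finite exact potential game: (1) every improving unilateral deviation
strictly increases the potential; (2) there is no infinite sequence of
improving best-response steps; (3) best-response dynamics can terminate at a
Nash equilibrium: one exists. -/
theorem stmt_6 {ι : Type*} [DecidableEq ι] [Fintype ι] (A : ι → Type*)
    [∀ i, Fintype (A i)] [∀ i, Nonempty (A i)]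
    (U : ι → (∀ i, A i) → ℝ) (φ : (∀ i, A i) → ℝ)
    (hpot : ∀ (i : ι) (a : ∀ j, A j) (a' : A i),
      U i a - U i (Function.update a i a') = φ a - φ (Function.update a i a')) :
    (∀ (i : ι) (a : ∀ j, A j) (a' : A i),
        U i a < U i (Function.update a i a') → φ a < φ (Function.update a i a'))
      ∧ (¬ ∃ a : ℕ → ∀ i, A i, ∀ t, ∃ (i : ι) (a' : A i),
          a (t + 1) = Function.update (a t) i a' ∧ U i (a t) < U i (a (t + 1)))
      ∧ (∃ astar : ∀ i, A i, ∀ (i : ι) (a' : A i),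
          U i (Function.update astar i a') ≤ U i astar) := by
  have h1 : ∀ (i : ι) (a : ∀ j, A j) (a' : A i),
      U i a < U i (Function.update a i a') → φ a < φ (Function.update a i a') := by
    intro i a a' h
    have := hpot i a a'
    linarith
  refine ⟨h1, ?_, ?_⟩
  · rintro ⟨a, ha⟩
    have hmono : StrictMono (fun t => φ (a t)) := by
      apply strictMono_nat_of_lt_succ
      intro t
      obtain ⟨i, a', heq, hlt⟩ := ha t
      rw [heq] at hlt ⊢
      exact h1 i (a t) a' hlt
    have hinj : Function.Injective a := fun s t hst => hmono.injective (by simp [hst])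
    exact (Finite.exists_ne_map_eq_of_infinite a).elim (fun s ⟨t, hne, heq⟩ => hne (hinj heq))
  · obtain ⟨astar, hmax⟩ := Finite.exists_max φ
    refine ⟨astar, fun i a' => ?_⟩
    have := hpot i astar a'
    have := hmax (Function.update astar i a')
    linarith
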